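/- arXiv:2009.02871 — 3 statements merged into one kernel-verified Lean document; each statement's English description precedes it below -/
import Mathlib

section
/- Let M, N be 2×2 complex matrices such that M, N, and MN each have two distinct eigenvalues, and 1 is an eigenvalue of each of M, N, and MN. Then M, N, and MN have a common eigenvector. -/
/-!
Let `u`, `w` be nonzero vectors fixed by `M` and `N`. If they are proportional, `u` is fixed by
both. Otherwise `(u, w)` is a basis in which `M = [[1, m], [0, a]]` and `N = [[b, 0], [n, 1]]`.
A nonzero fixed vector of `MN` forces `m n = (a - 1)(b - 1)`, and this identity makes
`(b - 1) u + n w` an eigenvector of `M` (for `a`) and of `N` (for `b`); it is nonzero unless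
`n = 0`, in which case `u` itself is a common eigenvector.
-/

open Matrix

/-- An eigenvector of a matrix. -/
def HasEigenPair (A : Matrix (Fin 2) (Fin 2) ℂ) (μ : ℂ) (v : Fin 2 → ℂ) : Prop :=
  v ≠ 0 ∧ A.mulVec v = μ • v

def HasEigenvalue' (A : Matrix (Fin 2) (Fin 2) ℂ) (μ : ℂ) : Prop :=
  ∃ v, HasEigenPair A μ v

def HasTwoDistinctEigenvalues (A : Matrix (Fin 2) (Fin 2) ℂ) : Prop :=
  ∃ μ₁ μ₂ : ℂ, μ₁ ≠ μ₂ ∧ HasEigenvalue' A μ₁ ∧ HasEigenvalue' A μ₂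

open Module

lemma exists_smul_add_smul_eq_of_finrank_eq_two {K V : Type*} [Field K] [AddCommGroup V]
    [Module K V] (hV : finrank K V = 2) {u w : V} (h : LinearIndependent K ![u, w]) (x : V) :
    ∃ s t : K, s • u + t • w = x := by
  have hspan := h.span_eq_top_of_card_eq_finrank (by simp [hV])
  rw [range_cons_cons_empty] at hspan
  exact Submodule.mem_span_pair.mp (hspan ▸ Submodule.mem_top)

namespace Module.End

variable {K V : Type*} [Field K] [AddCommGroup V] [Module K V]

lemma hasEigenvector_of_apply_eq_smul {f : End K V} {μ : K} {x : V} (hx : x ≠ 0)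
    (h : f x = μ • x) : f.HasEigenvector μ x :=
  ⟨mem_eigenspace_iff.mpr h, hx⟩

variable {f g : End K V} {u w : V} {a b m n : K}

lemma mul_eq_sub_one_mul_sub_one_of_hasEigenvalue_one (hV : finrank K V = 2)
    (h : LinearIndependent K ![u, w]) (hfu : f u = u) (hfw : f w = m • u + a • w)
    (hgu : g u = b • u + n • w) (hgw : g w = w) (hfg : (f * g).HasEigenvalue 1) :
    m * n = (a - 1) * (b - 1) := by
  obtain ⟨x, hx⟩ := hfg.exists_hasEigenvector
  obtain ⟨α, β, rfl⟩ := exists_smul_add_smul_eq_of_finrank_eq_two hV h x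
  have hfix := hx.apply_eq_smul
  simp only [mul_apply, map_add, map_smul, hfu, hfw, hgu, hgw, one_smul] at hfix
  obtain ⟨h₁, h₂⟩ := LinearIndependent.pair_iff.mp h (α * (b - 1 + n * m) + β * m)
    (α * n * a + β * (a - 1)) (by linear_combination (norm := module) hfix)
  have hαβ : α ≠ 0 ∨ β ≠ 0 := by
    by_contra! h0
    exact hx.2 (by simp [h0.1, h0.2])
  rcases hαβ with hα | hβ
  · exact mul_left_cancel₀ hα (by linear_combination m * h₂ - (a - 1) * h₁)
  · exact mul_left_cancel₀ hβ (by linear_combination n * a * h₁ - (b - 1 + n * m) * h₂)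

theorem exists_hasEigenvector_of_hasEigenvalue_one (hV : finrank K V = 2)
    (hf : f.HasEigenvalue 1) (hg : g.HasEigenvalue 1) (hfg : (f * g).HasEigenvalue 1) :
    ∃ v μ ν, f.HasEigenvector μ v ∧ g.HasEigenvector ν v := by
  obtain ⟨u, hu⟩ := hf.exists_hasEigenvector
  obtain ⟨w, hw⟩ := hg.exists_hasEigenvector
  have hfu : f u = u := by simpa using hu.apply_eq_smul
  have hgw : g w = w := by simpa using hw.apply_eq_smul
  by_cases hind : LinearIndependent K ![u, w]
  · obtain ⟨m, a, hfw⟩ := exists_smul_add_smul_eq_of_finrank_eq_two hV hind (f w)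
    obtain ⟨b, n, hgu⟩ := exists_smul_add_smul_eq_of_finrank_eq_two hV hind (g u)
    have hmn := mul_eq_sub_one_mul_sub_one_of_hasEigenvalue_one hV hind hfu hfw.symm hgu.symm
      hgw hfg
    by_cases hn : n = 0
    · exact ⟨u, 1, b, hu, hasEigenvector_of_apply_eq_smul hu.2 (by simp [← hgu, hn])⟩
    have hv : (b - 1) • u + n • w ≠ 0 := fun h0 ↦
      hn (LinearIndependent.pair_iff.mp hind _ _ h0).2
    refine ⟨(b - 1) • u + n • w, a, b, hasEigenvector_of_apply_eq_smul hv ?_,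
      hasEigenvector_of_apply_eq_smul hv ?_⟩
    · simp only [map_add, map_smul, hfu, ← hfw]
      linear_combination (norm := module) hmn • u
    · simp only [map_add, map_smul, hgw, ← hgu]
      module
  · obtain ⟨c, rfl⟩ : ∃ c : K, c • u = w := by
      simpa using (LinearIndependent.pair_iff' hu.2).not.mp hind
    have hc : c ≠ 0 := by
      rintro rfl
      exact hw.2 (zero_smul K u)
    rw [map_smul] at hgw
    exact ⟨u, 1, 1, hu, hasEigenvector_of_apply_eq_smul hu.2
      (by simpa using smul_right_injective V hc hgw)⟩

end Module.End

lemma HasEigenvalue'.hasEigenvalue_toLin' {A : Matrix (Fin 2) (Fin 2) ℂ} {μ : ℂ}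
    (hA : HasEigenvalue' A μ) : Module.End.HasEigenvalue (toLin' A) μ := by
  obtain ⟨v, hv, hAv⟩ := hA
  exact Module.End.hasEigenvalue_of_hasEigenvector
    (Module.End.hasEigenvector_of_apply_eq_smul hv (by simpa using hAv))

theorem stmt_0_general (M N : Matrix (Fin 2) (Fin 2) ℂ)
    (hM1 : HasEigenvalue' M 1) (hN1 : HasEigenvalue' N 1)
    (hMN1 : HasEigenvalue' (M * N) 1) :
    ∃ v : Fin 2 → ℂ, v ≠ 0 ∧ (∃ μ : ℂ, M.mulVec v = μ • v) ∧ (∃ μ : ℂ, N.mulVec v = μ • v) ∧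
      (∃ μ : ℂ, (M * N).mulVec v = μ • v) := by
  have hMN : Module.End.HasEigenvalue (toLin' M * toLin' N) 1 := by
    rw [Module.End.mul_eq_comp, ← toLin'_mul]
    exact hMN1.hasEigenvalue_toLin'
  obtain ⟨v, μ, ν, hMv, hNv⟩ := Module.End.exists_hasEigenvector_of_hasEigenvalue_one
    (finrank_fin_fun ℂ) hM1.hasEigenvalue_toLin' hN1.hasEigenvalue_toLin' hMN
  have hMv' : M *ᵥ v = μ • v := by simpa using hMv.apply_eq_smul
  have hNv' : N *ᵥ v = ν • v := by simpa using hNv.apply_eq_smul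
  refine ⟨v, hMv.2, ⟨μ, hMv'⟩, ⟨ν, hNv'⟩, ⟨ν * μ, ?_⟩⟩
  rw [← mulVec_mulVec, hNv', mulVec_smul, hMv', smul_smul]

theorem stmt_0 (M N : Matrix (Fin 2) (Fin 2) ℂ)
    (hM : HasTwoDistinctEigenvalues M) (hN : HasTwoDistinctEigenvalues N)
    (hMN : HasTwoDistinctEigenvalues (M * N))
    (hM1 : HasEigenvalue' M 1) (hN1 : HasEigenvalue' N 1)
    (hMN1 : HasEigenvalue' (M * N) 1) :
    ∃ v : Fin 2 → ℂ, v ≠ 0 ∧ (∃ μ : ℂ, M.mulVec v = μ • v) ∧ (∃ μ : ℂ, N.mulVec v = μ • v) ∧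
      (∃ μ : ℂ, (M * N).mulVec v = μ • v) :=
  stmt_0_general M N hM1 hN1 hMN1
end

section
/- Fix m ∈ ℕ and a ∈ ℂ with a(a−1) ≠ 0. Let T be the (m+1)×(m+1) tridiagonal complex matrix with diagonal entries T(k,k) = (m−2k)a + k for 0 ≤ k ≤ m, superdiagonal entries T(k−1,k) = −k for 1 ≤ k ≤ m, and subdiagonal entries T(k+1,k) = a(a−1)(m−k) for 0 ≤ k ≤ m−1 (all other entries zero). Then the eigenvalues of T are exactly 0, 1, 2, …, m, i.e. its characteristic polynomial equals ∏_{j=0}^{m} (X − j). -/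
open Polynomial Matrix Finset


lemma sum3 (m iv : ℕ) (hi : iv < m + 1) (A B C : ℕ → ℂ) (F : ℕ → ℂ) :
    ∑ j ∈ Finset.range (m + 1),
      (if iv = j then A j else if iv + 1 = j then B j else if iv = j + 1 then C j else 0) * F j
    = A iv * F iv + (if iv + 1 < m + 1 then B (iv + 1) * F (iv + 1) else 0)
      + (if 1 ≤ iv then C (iv - 1) * F (iv - 1) else 0) := by
  have hsplit : ∀ j ∈ Finset.range (m + 1),
      (if iv = j then A j else if iv + 1 = j then B j else if iv = j + 1 then C j else 0) * F j
      = (if iv = j then A j * F j else 0) + (if iv + 1 = j then B j * F j else 0)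
        + (if iv = j + 1 then C j * F j else 0) := by
    intro j _
    split_ifs <;> first | (exfalso; omega) | ring
  rw [Finset.sum_congr rfl hsplit, Finset.sum_add_distrib, Finset.sum_add_distrib,
    Finset.sum_ite_eq, Finset.sum_ite_eq]
  congr 1
  · congr 1
    rw [if_pos (Finset.mem_range.mpr hi)]
    simp only [Finset.mem_range]
  · rcases iv with _ | n
    · simp
    · have : ∀ j, (n + 1 = j + 1) = (n = j) := by intro j; simp
      simp only [this]
      rw [Finset.sum_ite_eq, if_pos (Finset.mem_range.mpr (by omega))]
      simp

lemma sum2 (m pv : ℕ) (hp : pv < m + 1) (A B G : ℕ → ℂ) :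
    ∑ k ∈ Finset.range (m + 1),
      G k * (if k = pv then A k else if k + 1 = pv then B k else 0)
    = G pv * A pv + (if 1 ≤ pv then G (pv - 1) * B (pv - 1) else 0) := by
  have hsplit : ∀ k ∈ Finset.range (m + 1),
      G k * (if k = pv then A k else if k + 1 = pv then B k else 0)
      = (if k = pv then G k * A k else 0) + (if k + 1 = pv then G k * B k else 0) := by
    intro k _
    split_ifs <;> first | (exfalso; omega) | ring
  rw [Finset.sum_congr rfl hsplit, Finset.sum_add_distrib, Finset.sum_ite_eq',
    if_pos (Finset.mem_range.mpr hp)]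
  congr 1
  rcases pv with _ | q
  · simp
  · have : ∀ k, (k + 1 = q + 1) = (k = q) := by intro k; simp
    simp only [this]
    rw [Finset.sum_ite_eq', if_pos (Finset.mem_range.mpr (by omega))]
    simp

lemma choose_id1 (n k : ℕ) (h : k ≤ n) :
    ((k : ℂ) + 1) * (n.choose (k + 1) : ℕ) = ((n : ℂ) - k) * (n.choose k : ℕ) := by
  have h2 := congrArg (Nat.cast : ℕ → ℂ) (Nat.choose_succ_right_eq n k)
  push_cast [Nat.cast_sub h] at h2
  linear_combination h2

lemma sum_eval (m iv pv : ℕ) (a : ℂ) (hi : iv < m + 1) (hp : pv < m + 1) :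
    (∑ j ∈ Finset.range (m + 1),
      (if iv = j then ((m : ℂ) - 2 * j) * a + j
        else if iv + 1 = j then -(j : ℂ)
        else if iv = j + 1 then a * (a - 1) * ((m : ℂ) - j) else 0)
      * (if pv ≤ j then (((m - pv).choose (j - pv) : ℕ) : ℂ) * a ^ (j - pv) else 0))
    = ∑ k ∈ Finset.range (m + 1),
      (if k ≤ iv then (((m - k).choose (iv - k) : ℕ) : ℂ) * a ^ (iv - k) else 0)
      * (if k = pv then (pv : ℂ) else if k + 1 = pv then -(pv : ℂ) else 0) := by
  rw [sum3 m iv hi (fun j => ((m : ℂ) - 2 * j) * a + j) (fun j => -(j : ℂ))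
      (fun j => a * (a - 1) * ((m : ℂ) - j))
      (fun j => if pv ≤ j then (((m - pv).choose (j - pv) : ℕ) : ℂ) * a ^ (j - pv) else 0),
    sum2 m pv hp (fun _ => (pv : ℂ)) (fun _ => -(pv : ℂ))
      (fun k => if k ≤ iv then (((m - k).choose (iv - k) : ℕ) : ℂ) * a ^ (iv - k) else 0)]
  obtain h | h | h : iv + 1 < pv ∨ iv + 1 = pv ∨ pv ≤ iv := by omega
  · split_ifs <;> first | (exfalso; omega) | ring
  · subst h
    simp only [Nat.add_sub_cancel, Nat.sub_self, Nat.choose_zero_right, pow_zero, Nat.cast_one]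
    split_ifs <;> first | (exfalso; omega) | (push_cast; ring)
  · obtain ⟨d, rfl⟩ : ∃ d, iv = pv + d := ⟨iv - pv, by omega⟩
    obtain ⟨e, rfl⟩ : ∃ e, m = pv + d + e := ⟨m - (pv + d), by omega⟩
    rcases d with _ | d
    · simp only [Nat.add_zero]
      have c1 : pv + e - pv = e := by omega
      have c2 : pv + 1 - pv = 1 := by omega
      simp only [c1, c2, Nat.sub_self, Nat.choose_zero_right, Nat.choose_one_right,
        pow_zero, pow_one, Nat.cast_one]
      split_ifs <;>
        first
          | (exfalso; omega)
          | (push_cast; ring1)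
          | (have h0 : pv = 0 := by omega
             subst h0
             first
               | (push_cast; ring1)
               | (have he : e = 0 := by omega
                  subst he
                  push_cast; ring1))
          | (have d1 : pv + e - (pv - 1) = e + 1 := by omega
             have d2 : pv - (pv - 1) = 1 := by omega
             rw [d1, d2, Nat.choose_one_right]
             first
               | (push_cast; ring1)
               | (have he : e = 0 := by omega
                  subst he
                  push_cast; ring1))
    · have r1 : pv + (d + 1) - pv = d + 1 := by omega
      have r2 : pv + (d + 1) + 1 - pv = d + 1 + 1 := by omega
      have r3 : pv + (d + 1) - 1 = pv + d := by omega
      have r4 : pv + d - pv = d := by omega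
      have r5 : pv + (d + 1) + e - pv = d + 1 + e := by omega
      simp only [r1, r2, r3, r4, r5]
      have h1 := choose_id1 (d + 1 + e) (d + 1) (by omega)
      have h2 := choose_id1 (d + 1 + e) d (by omega)
      have h3 := congrArg (Nat.cast : ℕ → ℂ) (Nat.choose_succ_succ (d + 1 + e) (d + 1))
      push_cast at h1 h2 h3
      split_ifs <;>
        first
          | (exfalso; omega)
          | (have r6 : pv + (d + 1) + e - (pv - 1) = d + 1 + e + 1 := by omega
             have r7 : pv + (d + 1) - (pv - 1) = d + 1 + 1 := by omega
             rw [r6, r7]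
             push_cast
             linear_combination (a ^ (d + 1) - a ^ (d + 1 + 1)) * h2 - a ^ (d + 1 + 1) * h1
               + (pv : ℂ) * a ^ (d + 1 + 1) * h3)
          | (have h0 : pv = 0 := by omega
             subst h0
             push_cast
             linear_combination (a ^ (d + 1) - a ^ (d + 1 + 1)) * h2 - a ^ (d + 1 + 1) * h1)
          | (have he : e = 0 := by omega
             subst he
             have hz : (((d + 1 + 0).choose (d + 1 + 1) : ℕ) : ℂ) = 0 := by
               rw [Nat.choose_eq_zero_of_lt (by omega)]
               norm_num
             push_cast at h1 h2 h3 ⊢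
             first
               | (have r6 : pv + (d + 1) + 0 - (pv - 1) = d + 1 + 0 + 1 := by omega
                  have r7 : pv + (d + 1) - (pv - 1) = d + 1 + 1 := by omega
                  rw [r6, r7]
                  push_cast
                  linear_combination (a ^ (d + 1) - a ^ (d + 1 + 1)) * h2 - a ^ (d + 1 + 1) * h1
                    + (pv : ℂ) * a ^ (d + 1 + 1) * h3
                    + ((pv : ℂ) + (d : ℂ) + 2) * a ^ (d + 1 + 1) * hz)
               | (have h0 : pv = 0 := by omega
                  subst h0
                  push_cast
                  linear_combination (a ^ (d + 1) - a ^ (d + 1 + 1)) * h2 - a ^ (d + 1 + 1) * h1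
                    + ((d : ℂ) + 2) * a ^ (d + 1 + 1) * hz))


noncomputable def Tmat (m : ℕ) (a : ℂ) : Matrix (Fin (m + 1)) (Fin (m + 1)) ℂ :=
  Matrix.of fun i j : Fin (m + 1) =>
    if (i : ℕ) = (j : ℕ) then ((m : ℂ) - 2 * (j : ℕ)) * a + (j : ℕ)
    else if (i : ℕ) + 1 = (j : ℕ) then -((j : ℕ) : ℂ)
    else if (i : ℕ) = (j : ℕ) + 1 then a * (a - 1) * ((m : ℂ) - (j : ℕ))
    else 0

noncomputable def Lmat (m : ℕ) (a : ℂ) : Matrix (Fin (m + 1)) (Fin (m + 1)) ℂ :=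
  Matrix.of fun i k : Fin (m + 1) =>
    if (k : ℕ) ≤ (i : ℕ) then (((m - (k : ℕ)).choose ((i : ℕ) - (k : ℕ)) : ℕ) : ℂ) * a ^ ((i : ℕ) - (k : ℕ)) else 0

noncomputable def Bmat (m : ℕ) : Matrix (Fin (m + 1)) (Fin (m + 1)) ℂ :=
  Matrix.of fun i j : Fin (m + 1) =>
    if (i : ℕ) = (j : ℕ) then ((j : ℕ) : ℂ)
    else if (i : ℕ) + 1 = (j : ℕ) then -((j : ℕ) : ℂ) else 0

lemma key (m : ℕ) (a : ℂ) : Tmat m a * Lmat m a = Lmat m a * Bmat m := by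
  ext i p
  rw [Matrix.mul_apply, Matrix.mul_apply]
  simp only [Tmat, Lmat, Bmat, Matrix.of_apply]
  have h1 := Fin.sum_univ_eq_sum_range (fun jv =>
      (if (i : ℕ) = jv then ((m : ℂ) - 2 * jv) * a + jv
        else if (i : ℕ) + 1 = jv then -(jv : ℂ)
        else if (i : ℕ) = jv + 1 then a * (a - 1) * ((m : ℂ) - jv) else 0)
      * (if (p : ℕ) ≤ jv then (((m - (p : ℕ)).choose (jv - (p : ℕ)) : ℕ) : ℂ) * a ^ (jv - (p : ℕ)) else 0)) (m + 1)
  have h2 := Fin.sum_univ_eq_sum_range (fun kv =>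
      (if kv ≤ (i : ℕ) then (((m - kv).choose ((i : ℕ) - kv) : ℕ) : ℂ) * a ^ ((i : ℕ) - kv) else 0)
      * (if kv = (p : ℕ) then ((p : ℕ) : ℂ) else if kv + 1 = (p : ℕ) then -((p : ℕ) : ℂ) else 0)) (m + 1)
  rw [h1, h2, sum_eval m i p a i.isLt p.isLt]

lemma Bmat_triangular (m : ℕ) : (Bmat m).BlockTriangular id := by
  intro i j h
  simp only [Bmat, Matrix.of_apply]
  have : (j : ℕ) < (i : ℕ) := h
  rw [if_neg (by omega), if_neg (by omega)]

lemma Lmat_det (m : ℕ) (a : ℂ) : (Lmat m a).det = 1 := by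
  have ht : (Lmat m a).BlockTriangular OrderDual.toDual := by
    intro i j h
    simp only [Lmat, Matrix.of_apply]
    have : (i : ℕ) < (j : ℕ) := h
    rw [if_neg (by omega)]
  rw [Matrix.det_of_lowerTriangular _ ht]
  apply Finset.prod_eq_one
  intro i _
  simp [Lmat]

lemma charpoly_conj_aux {n : ℕ} (P M : Matrix (Fin n) (Fin n) ℂ) (hP : IsUnit P.det) :
    (P * M * P⁻¹).charpoly = M.charpoly := by
  have h1 : P * P⁻¹ = 1 := Matrix.mul_nonsing_inv P hP
  have h2 : (C : ℂ →+* ℂ[X]).mapMatrix P * (C : ℂ →+* ℂ[X]).mapMatrix P⁻¹ = 1 := by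
    rw [← _root_.map_mul, h1, _root_.map_one]
  have key : charmatrix (P * M * P⁻¹) =
      (C : ℂ →+* ℂ[X]).mapMatrix P * charmatrix M * (C : ℂ →+* ℂ[X]).mapMatrix P⁻¹ := by
    rw [charmatrix, charmatrix, _root_.map_mul, _root_.map_mul, Matrix.mul_sub, Matrix.sub_mul]
    congr 1
    have hc : (C : ℂ →+* ℂ[X]).mapMatrix P * Matrix.scalar (Fin n) X
        = Matrix.scalar (Fin n) X * (C : ℂ →+* ℂ[X]).mapMatrix P :=
      (Matrix.scalar_commute (X : ℂ[X]) (fun r => Commute.all _ _) _).symm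
    rw [hc, Matrix.mul_assoc, h2, Matrix.mul_one]
  rw [Matrix.charpoly, key, Matrix.det_mul, Matrix.det_mul, mul_right_comm,
    ← Matrix.det_mul, h2, Matrix.det_one, one_mul, Matrix.charpoly]

theorem stmt_5 (m : ℕ) (a : ℂ) (ha : a * (a - 1) ≠ 0) :
    (Matrix.of fun i j : Fin (m + 1) =>
      if (i : ℕ) = (j : ℕ) then ((m : ℂ) - 2 * (j : ℕ)) * a + (j : ℕ)
      else if (i : ℕ) + 1 = (j : ℕ) then -((j : ℕ) : ℂ)
      else if (i : ℕ) = (j : ℕ) + 1 then a * (a - 1) * ((m : ℂ) - (j : ℕ))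
      else 0).charpoly = ∏ j ∈ Finset.range (m + 1), (X - C ((j : ℕ) : ℂ)) := by
  have hdet : IsUnit (Lmat m a).det := by rw [Lmat_det]; exact isUnit_one
  have hT : Tmat m a = Lmat m a * Bmat m * (Lmat m a)⁻¹ := by
    rw [← key, Matrix.mul_assoc, Matrix.mul_nonsing_inv _ hdet, Matrix.mul_one]
  show (Tmat m a).charpoly = _
  rw [hT, charpoly_conj_aux _ _ hdet, Matrix.charpoly_of_upperTriangular _ (Bmat_triangular m)]
  rw [← Fin.prod_univ_eq_prod_range (fun j => X - C ((j : ℕ) : ℂ)) (m + 1)]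
  apply Finset.prod_congr rfl
  intro i _
  simp [Bmat]
end

section
/- Let n ∈ ℕ, and let b, c ∈ ℂ with c not a nonpositive integer. Then the hypergeometric equation x(1−x)y'' + (c − (−n + b + 1)x)y' + nb·y = 0 (i.e. the case a = −n) has a nonzero polynomial solution of degree at most n, namely the terminating series p(x) = Σ_{k=0}^{n} ((−n)_k (b)_k / ((c)_k k!)) x^k. -/
open Polynomial

theorem stmt_11 (n : ℕ) (b c : ℂ) (hc : ∀ k : ℕ, c ≠ -k) :
    ∃ p : Polynomial ℂ,
      p = ∑ k ∈ Finset.range (n + 1),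
        C (((∏ j ∈ Finset.range k, ((-(n : ℂ)) + j)) *
            (∏ j ∈ Finset.range k, (b + j))) /
          ((∏ j ∈ Finset.range k, (c + j)) * k.factorial)) * X ^ k ∧
      p ≠ 0 ∧ p.natDegree ≤ n ∧
      X * (1 - X) * p.derivative.derivative +
        (C c - C (-(n : ℂ) + b + 1) * X) * p.derivative + C ((n : ℂ) * b) * p = 0 := by
  classical
  set a : ℕ → ℂ := fun k =>
    (((∏ j ∈ Finset.range k, ((-(n : ℂ)) + j)) *
        (∏ j ∈ Finset.range k, (b + j))) /
      ((∏ j ∈ Finset.range k, (c + j)) * k.factorial)) with ha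
  have hden : ∀ k : ℕ, (∏ j ∈ Finset.range k, (c + (j : ℂ))) ≠ 0 := by
    intro k
    refine Finset.prod_ne_zero_iff.2 fun j _ => ?_
    intro h
    exact hc j (by linear_combination h)
  have hcj : ∀ j : ℕ, c + (j : ℂ) ≠ 0 := by
    intro j h
    exact hc j (by linear_combination h)
  have hfact : ∀ k : ℕ, ((k.factorial : ℂ)) ≠ 0 := by
    intro k
    exact_mod_cast Nat.cast_ne_zero.2 k.factorial_ne_zero
  have ha0 : a 0 = 1 := by simp [ha]
  have hvan : ∀ k : ℕ, n < k → a k = 0 := by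
    intro k hk
    have : (∏ j ∈ Finset.range k, ((-(n : ℂ)) + j)) = 0 := by
      apply Finset.prod_eq_zero (Finset.mem_range.2 hk)
      simp
    simp [ha, this]
  have hrec : ∀ m : ℕ, ((m : ℂ) + 1) * (c + m) * a (m + 1)
      = ((-(n : ℂ)) + m) * (b + m) * a m := by
    intro m
    simp only [ha]
    rw [Finset.prod_range_succ, Finset.prod_range_succ, Finset.prod_range_succ,
      Nat.factorial_succ]
    have h1 := hden m
    have h2 := hcj m
    have h3 := hfact m
    have h4 : ((m : ℂ) + 1) ≠ 0 := Nat.cast_add_one_ne_zero m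
    push_cast
    field_simp
  set p : Polynomial ℂ := ∑ k ∈ Finset.range (n + 1), C (a k) * X ^ k with hp
  have hcoeff : ∀ m : ℕ, p.coeff m = a m := by
    intro m
    rw [hp, Polynomial.finset_sum_coeff]
    simp only [coeff_C_mul, coeff_X_pow, mul_ite, mul_one, mul_zero]
    rw [Finset.sum_ite_eq (Finset.range (n + 1)) m a]
    by_cases h : m ∈ Finset.range (n + 1)
    · simp [h]
    · rw [if_neg h]
      exact (hvan m (Nat.lt_of_succ_le (Nat.not_lt.1
        (by simpa [Finset.mem_range] using h)))).symm
  have hD : ∀ m : ℕ, p.derivative.coeff m = a (m + 1) * ((m : ℂ) + 1) := by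
    intro m
    rw [Polynomial.coeff_derivative, hcoeff]
    try push_cast
    try ring
  have hDD : ∀ m : ℕ, p.derivative.derivative.coeff m
      = a (m + 2) * ((m : ℂ) + 2) * ((m : ℂ) + 1) := by
    intro m
    rw [Polynomial.coeff_derivative, hD]
    try push_cast
    try ring
  refine ⟨p, rfl, ?_, ?_, ?_⟩
  · intro h
    have := hcoeff 0
    rw [h] at this
    simp [ha0] at this
  · rw [Polynomial.natDegree_le_iff_coeff_eq_zero]
    intro m hm
    rw [hcoeff]
    exact hvan m hm
  · have hsplit : X * (1 - X) * p.derivative.derivative +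
        (C c - C (-(n : ℂ) + b + 1) * X) * p.derivative + C ((n : ℂ) * b) * p
        = X * p.derivative.derivative - X * (X * p.derivative.derivative)
          + C c * p.derivative - C (-(n : ℂ) + b + 1) * (X * p.derivative)
          + C ((n : ℂ) * b) * p := by ring
    rw [hsplit]
    ext m
    simp only [coeff_add, coeff_sub, coeff_C_mul, coeff_zero]
    match m with
    | 0 =>
      simp only [Polynomial.mul_coeff_zero, coeff_X_zero, zero_mul, mul_zero,
        hD, hcoeff]
      have h := hrec 0
      push_cast at h ⊢
      linear_combination h
    | 1 =>
      rw [show (1 : ℕ) = 0 + 1 from rfl, Polynomial.coeff_X_mul,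
        Polynomial.coeff_X_mul, Polynomial.coeff_X_mul,
        Polynomial.mul_coeff_zero]
      simp only [coeff_X_zero, zero_mul, mul_zero, hD, hDD, hcoeff]
      have h := hrec 1
      push_cast at h ⊢
      linear_combination h
    | (m + 2) =>
      rw [show m + 2 = (m + 1) + 1 from rfl, Polynomial.coeff_X_mul,
        Polynomial.coeff_X_mul, Polynomial.coeff_X_mul,
        Polynomial.coeff_X_mul]
      simp only [hD, hDD, hcoeff]
      have h := hrec (m + 2)
      push_cast at h ⊢
      linear_combination h
end
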